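/- Let A ⊆ ℝⁿ be a Lebesgue-measurable set of finite Lebesgue measure and let V be a finite-dimensional real vector subspace of L⁰(A). Then there exists ε_c > 0 such that for every measurable set K ⊆ A with ℒⁿ(A \ K) ≤ ε_c, the restriction map V → L⁰(K), v ↦ v|_K, is injective: if v ∈ V vanishes almost everywhere on K, then v vanishes almost everywhere on A. -/

import Mathlib

/-!
In coordinates `a` with respect to a basis of `V`, the function `a ↦ μ {x | (∑ aᵢ vᵢ) x ≠ 0}` is
lower semicontinuous (Fatou's lemma, since `{a | (∑ aᵢ vᵢ) x ≠ 0}` is open for every `x`),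
invariant under scaling, and positive away from `0`. Its minimum on the unit sphere is therefore a
positive lower bound for the measure of the support of every nonzero `v ∈ V`, whereas the support
of a `v` vanishing a.e. on `K` lies in `A \ K` up to a null set.
-/

open MeasureTheory Filter Topology
open scoped ENNReal

namespace MeasureTheory

variable {α : Type*} [MeasurableSpace α] {μ : Measure α}

theorem Measure.restrict_apply_le_add_measure_diff (A K s : Set α) :
    μ.restrict A s ≤ μ.restrict K s + μ (A \ K) :=
  calc μ.restrict A s ≤ μ.restrict (K ∪ A \ K) s :=
        Measure.le_iff'.1 (Measure.restrict_mono_set μ (by simp)) s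
    _ ≤ μ.restrict K s + μ.restrict (A \ K) s :=
        Measure.le_iff'.1 (Measure.restrict_union_le K _) s
    _ ≤ μ.restrict K s + μ (A \ K) :=
        add_le_add le_rfl
          ((measure_mono (Set.subset_univ s)).trans_eq (Measure.restrict_apply_univ _))

theorem lowerSemicontinuous_measure_setOf_ne_zero {X E : Type*} [TopologicalSpace X]
    [FirstCountableTopology X] [TopologicalSpace E] [T1Space E] [Zero E] [MeasurableSpace E]
    [MeasurableSingletonClass E] {G : X → α → E} (hcont : ∀ x, Continuous fun a ↦ G a x)
    (hmeas : ∀ a, Measurable (G a)) :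
    LowerSemicontinuous fun a ↦ μ {x | G a x ≠ 0} := by
  have hset : ∀ a, MeasurableSet {x | G a x ≠ 0} := fun a ↦
    (hmeas a (measurableSet_singleton 0).compl)
  refine lowerSemicontinuous_iff_le_liminf.2 fun a ↦ ?_
  have hpt : ∀ x, {x | G a x ≠ 0}.indicator 1 x ≤
      liminf (fun a' ↦ {x | G a' x ≠ 0}.indicator (1 : α → ℝ≥0∞) x) (𝓝 a) := by
    intro x
    by_cases hx : G a x ≠ 0
    · refine le_liminf_of_le (by isBoundedDefault) ?_
      filter_upwards [(hcont x).continuousAt.eventually_ne hx] with a' ha'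
      simp [Set.indicator_of_mem, hx, ha']
    · simp [hx]
  calc μ {x | G a x ≠ 0} = ∫⁻ x, {x | G a x ≠ 0}.indicator 1 x ∂μ :=
        (lintegral_indicator_one (hset a)).symm
    _ ≤ ∫⁻ x, liminf (fun a' ↦ {x | G a' x ≠ 0}.indicator (1 : α → ℝ≥0∞) x) (𝓝 a) ∂μ :=
        lintegral_mono hpt
    _ ≤ liminf (fun a' ↦ ∫⁻ x, {x | G a' x ≠ 0}.indicator 1 x ∂μ) (𝓝 a) :=
        lintegral_liminf_le fun a' ↦ measurable_const.indicator (hset a')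
    _ = liminf (fun a' ↦ μ {x | G a' x ≠ 0}) (𝓝 a) := by
        simp only [lintegral_indicator_one (hset _)]

theorem AEEqFun.measure_setOf_ne_zero_eq_zero_iff {E : Type*} [TopologicalSpace E] [Zero E]
    (f : α →ₘ[μ] E) : μ {x | f x ≠ 0} = 0 ↔ f = 0 := by
  rw [← ae_iff, AEEqFun.ext_iff]
  exact ⟨fun h ↦ EventuallyEq.trans h AEEqFun.coeFn_zero.symm,
    fun h ↦ EventuallyEq.trans h AEEqFun.coeFn_zero⟩

theorem exists_pos_le_of_lowerSemicontinuous_of_smul_eq {W : Type*} [NormedAddCommGroup W]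
    [NormedSpace ℝ W] [ProperSpace W] {F : W → ℝ≥0∞} (hF : LowerSemicontinuous F)
    (hsmul : ∀ (t : ℝ) (a : W), t ≠ 0 → F (t • a) = F a) (hpos : ∀ a, a ≠ 0 → 0 < F a) :
    ∃ m, 0 < m ∧ ∀ a, a ≠ 0 → m ≤ F a := by
  have hnormalize : ∀ a : W, a ≠ 0 → ‖a‖⁻¹ • a ∈ Metric.sphere (0 : W) 1 := fun a ha ↦ by
    simp [norm_smul, ha]
  rcases (Metric.sphere (0 : W) 1).eq_empty_or_nonempty with hempty | hne
  · exact ⟨1, one_pos, fun a ha ↦ by simpa [hempty] using hnormalize a ha⟩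
  obtain ⟨a₀, ha₀, hmin⟩ :=
    (hF.lowerSemicontinuousOn _).exists_isMinOn hne (isCompact_sphere 0 1)
  refine ⟨F a₀, hpos a₀ (ne_zero_of_mem_unit_sphere ⟨a₀, ha₀⟩), fun a ha ↦ ?_⟩
  rw [← hsmul ‖a‖⁻¹ a (by positivity)]
  exact hmin (hnormalize a ha)

theorem AEEqFun.exists_pos_le_measure_setOf_ne_zero {E : Type*} [NormedAddCommGroup E]
    [NormedSpace ℝ E] [MeasurableSpace E] [BorelSpace E] (V : Submodule ℝ (α →ₘ[μ] E))
    [FiniteDimensional ℝ V] : ∃ m, 0 < m ∧ ∀ v ∈ V, v ≠ 0 → m ≤ μ {x | v x ≠ 0} := by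
  let b := Module.finBasis ℝ V
  let G : (Fin (Module.finrank ℝ V) → ℝ) → α → E := fun a x ↦ ∑ i, a i • (b i : α →ₘ[μ] E) x
  have hG : ∀ a, ⇑(b.equivFun.symm a : α →ₘ[μ] E) =ᵐ[μ] G a := fun a ↦ by
    have hsmul : ∀ᵐ x ∂μ, ∀ i, (a i • (b i : α →ₘ[μ] E)) x = a i • (b i : α →ₘ[μ] E) x :=
      ae_all_iff.2 fun i ↦ AEEqFun.coeFn_smul _ _
    rw [b.equivFun_symm_apply, Submodule.coe_sum]
    filter_upwards [AEEqFun.coeFn_fun_finsetSum Finset.univ fun i ↦ a i • (b i : α →ₘ[μ] E),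
      hsmul] with x hsum hsmul
    simp [G, hsum, hsmul]
  have hF : ∀ a, μ {x | G a x ≠ 0} = μ {x | (b.equivFun.symm a : α →ₘ[μ] E) x ≠ 0} := fun a ↦
    measure_congr ((hG a).symm.fun_comp (· ≠ 0))
  obtain ⟨m, hm, hmF⟩ := exists_pos_le_of_lowerSemicontinuous_of_smul_eq
    (F := fun a ↦ μ {x | G a x ≠ 0})
    (lowerSemicontinuous_measure_setOf_ne_zero (fun x ↦ by fun_prop) (fun a ↦ by fun_prop))
    (fun t a ht ↦ by
      have hGsmul : ∀ x, G (t • a) x = t • G a x := fun x ↦ by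
        simp [G, Finset.smul_sum, smul_smul]
      simp [hGsmul, ht])
    (fun a ha ↦ by
      rwa [hF, pos_iff_ne_zero, Ne, AEEqFun.measure_setOf_ne_zero_eq_zero_iff,
        Submodule.coe_eq_zero, LinearEquiv.map_eq_zero_iff])
  refine ⟨m, hm, fun v hv hv0 ↦ ?_⟩
  simpa [hF] using hmF (b.equivFun ⟨v, hv⟩) (by simpa using hv0)

end MeasureTheory

theorem stmt10 (n : ℕ) (A : Set (EuclideanSpace ℝ (Fin n)))
    (V : Submodule ℝ (EuclideanSpace ℝ (Fin n) →ₘ[volume.restrict A] ℝ))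
    (hV : FiniteDimensional ℝ V) :
    ∃ εc : ℝ, 0 < εc ∧
      ∀ K : Set (EuclideanSpace ℝ (Fin n)), MeasurableSet K → K ⊆ A →
        volume (A \ K) ≤ ENNReal.ofReal εc →
        ∀ v ∈ V, (∀ᵐ x ∂(volume.restrict K), v x = 0) → v = 0 := by
  have := hV
  obtain ⟨m, hm, hmV⟩ := AEEqFun.exists_pos_le_measure_setOf_ne_zero V
  obtain ⟨ε, -, hε, hεm⟩ := ENNReal.lt_iff_exists_real_btwn.1 hm
  refine ⟨ε, ENNReal.ofReal_pos.1 hε, fun K _ _ hK v hv hvK ↦ ?_⟩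
  by_contra hv0
  have hsupp : volume.restrict A {x | v x ≠ 0} ≤ volume (A \ K) := by
    have hvK' : volume.restrict K {x | v x ≠ 0} = 0 := ae_iff.1 hvK
    simpa [hvK'] using
      Measure.restrict_apply_le_add_measure_diff (μ := volume) A K {x | v x ≠ 0}
  exact (hmV v hv hv0).not_gt ((hsupp.trans hK).trans_lt hεm)
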